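/- Let A₁, A₂ ∈ ℂ^{n×n} and C₁, C₂ ∈ ℂ^{p×n} be such that the observability PBH condition holds: rank of the stacked matrix [[sI_n − A₁, −A₂^#], [−A₂, sI_n − A₁^#], [C₁, C₂^#], [C₂, C₁^#]] equals 2n for every s ∈ ℂ. Then every eigenvalue of A_C = {A₁,A₂}_⋄ has modulus strictly less than 1 if and only if there exist P₁, P₂ ∈ ℂ^{n×n} such that P_C = {P₁,P₂}_⋄ is Hermitian positive definite and satisfies the discrete Lyapunov equation A_C^H P_C A_C − P_C = −C_C^H C_C, where C_C = {C₁,C₂}_⋄. -/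

import Mathlib

open Matrix
open scoped ComplexOrder

noncomputable section

/-- Entrywise complex conjugate of a matrix `M`, written `M^#` in the paper. -/
def mconj {n m : Type*} (A : Matrix n m ℂ) : Matrix n m ℂ := A.map (starRingEnd ℂ)

/-- The complex-lifting (doubled-up) matrix `{A₁,A₂}_⋄ = [[A₁, A₂^#], [A₂, A₁^#]]`. -/
def dlift {n m : Type*} (A₁ A₂ : Matrix n m ℂ) : Matrix (n ⊕ n) (m ⊕ m) ℂ :=
  Matrix.fromBlocks A₁ (mconj A₂) A₂ (mconj A₁)

/-- The real-representation matrix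
`{A₁,A₂}_∘ = [[Re(A₁+A₂), −Im(A₁+A₂)], [Im(A₁−A₂), Re(A₁−A₂)]]`. -/
def realRep {n m : Type*} (A₁ A₂ : Matrix n m ℂ) : Matrix (n ⊕ n) (m ⊕ m) ℝ :=
  Matrix.fromBlocks ((A₁ + A₂).map Complex.re) (-((A₁ + A₂).map Complex.im))
    ((A₁ - A₂).map Complex.im) ((A₁ - A₂).map Complex.re)

/-- The unitary matrix `H_n = (1/√2)·[[I, jI], [I, −jI]]`. -/
def Hmat (n : Type*) [DecidableEq n] : Matrix (n ⊕ n) (n ⊕ n) ℂ :=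
  (Real.sqrt 2 : ℂ)⁻¹ • Matrix.fromBlocks 1 (Complex.I • 1) 1 (-(Complex.I • 1))

/-- The swap matrix `E_n = [[0, I], [I, 0]]`. -/
def Emat (n : Type*) [DecidableEq n] : Matrix (n ⊕ n) (n ⊕ n) ℂ :=
  Matrix.fromBlocks 0 1 1 0

/-- The real vector `(Re x ; Im x)` associated with a complex vector `x`. -/
def vreal {m : Type*} (x : m → ℂ) : (m ⊕ m) → ℝ :=
  Sum.elim (fun i => (x i).re) (fun i => (x i).im)

section AuxLemmas

open Filter
open scoped Topology

set_option linter.unusedSectionVars false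
set_option linter.unreachableTactic false
set_option linter.unusedTactic false
set_option maxHeartbeats 1000000

variable {m q : Type*} [Fintype m] [DecidableEq m] [Fintype q]

lemma aux_rank_inj (M : Matrix m m ℂ) (C : Matrix q m ℂ)
    (h : (Matrix.fromRows M C).rank = Fintype.card m) :
    ∀ v : m → ℂ, M *ᵥ v = 0 → C *ᵥ v = 0 → v = 0 := by
  intro v hM hC
  have hv : v ∈ LinearMap.ker (Matrix.fromRows M C).mulVecLin := by
    simp only [LinearMap.mem_ker, Matrix.mulVecLin_apply, Matrix.fromRows_mulVec, hM, hC]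
    ext (i | i) <;> simp
  have h1 := (Matrix.fromRows M C).mulVecLin.finrank_range_add_finrank_ker
  rw [Matrix.rank] at h
  rw [h, Module.finrank_pi] at h1
  have h2 : Module.finrank ℂ (LinearMap.ker (Matrix.fromRows M C).mulVecLin) = 0 := by omega
  have h3 : LinearMap.ker (Matrix.fromRows M C).mulVecLin = ⊥ :=
    Submodule.finrank_eq_zero.mp h2
  simpa [h3] using hv

lemma spec_iff (M : Matrix m m ℂ) (μ : ℂ) :
    μ ∈ spectrum ℂ M ↔ ∃ v, v ≠ 0 ∧ M *ᵥ v = μ • v := by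
  rw [spectrum.mem_iff, Matrix.isUnit_iff_isUnit_det, isUnit_iff_ne_zero, not_not,
    ← Matrix.exists_mulVec_eq_zero_iff]
  constructor
  · rintro ⟨v, hv, h⟩
    refine ⟨v, hv, ?_⟩
    rw [Algebra.algebraMap_eq_smul_one, Matrix.sub_mulVec, Matrix.smul_mulVec,
      Matrix.one_mulVec, sub_eq_zero] at h
    exact h.symm
  · rintro ⟨v, hv, h⟩
    refine ⟨v, hv, ?_⟩
    rw [Algebra.algebraMap_eq_smul_one, Matrix.sub_mulVec, Matrix.smul_mulVec,
      Matrix.one_mulVec, sub_eq_zero, h]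

lemma spec_ct (M : Matrix m m ℂ) (h : ∀ μ ∈ spectrum ℂ M, ‖μ‖ < 1) :
    ∀ μ ∈ spectrum ℂ Mᴴ, ‖μ‖ < 1 := by
  intro μ hμ
  have hc : (starRingEnd ℂ) μ ∈ spectrum ℂ M := by
    rw [spectrum.mem_iff] at hμ ⊢
    intro hu
    apply hμ
    have he : algebraMap ℂ (Matrix m m ℂ) μ - Mᴴ
        = (algebraMap ℂ (Matrix m m ℂ) ((starRingEnd ℂ) μ) - M)ᴴ := by
      simp [Algebra.algebraMap_eq_smul_one, Matrix.conjTranspose_smul]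
    rw [he, Matrix.isUnit_iff_isUnit_det, Matrix.det_conjTranspose]
    exact (Matrix.isUnit_iff_isUnit_det _).mp hu |>.star
  simpa using h _ hc

lemma quad_eq {l : Type*} [Fintype l] (Y : Matrix l m ℂ) (x : m → ℂ) :
    star x ⬝ᵥ ((Yᴴ * Y) *ᵥ x) = star (Y *ᵥ x) ⬝ᵥ (Y *ᵥ x) := by
  rw [← Matrix.mulVec_mulVec, Matrix.dotProduct_mulVec, ← Matrix.star_mulVec]

lemma obs_aux (A : Matrix m m ℂ) (C : Matrix q m ℂ)
    (hPBH : ∀ (s : ℂ) (v : m → ℂ),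
      (s • (1 : Matrix m m ℂ) - A) *ᵥ v = 0 → C *ᵥ v = 0 → v = 0)
    (v : m → ℂ) (hv : ∀ k : ℕ, (C * A ^ k) *ᵥ v = 0) : v = 0 := by
  by_contra hv0
  set N : Submodule ℂ (m → ℂ) := ⨅ k : ℕ, LinearMap.ker (C * A ^ k).mulVecLin with hN
  have hvN : v ∈ N := by
    rw [hN, Submodule.mem_iInf]
    intro k
    simpa using hv k
  have hinv : ∀ x ∈ N, A.mulVecLin x ∈ N := by
    intro x hx
    rw [hN, Submodule.mem_iInf] at hx ⊢
    intro k
    have := hx (k + 1)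
    simp only [LinearMap.mem_ker, Matrix.mulVecLin_apply] at this ⊢
    rw [pow_succ, ← Matrix.mul_assoc] at this
    rwa [Matrix.mulVec_mulVec]
  haveI : Nontrivial N := by
    refine Submodule.nontrivial_iff_ne_bot.mpr ?_
    intro hbot
    exact hv0 (by simpa [hbot] using hvN)
  obtain ⟨μ, hμ⟩ := Module.End.exists_eigenvalue
    (LinearMap.restrict A.mulVecLin hinv)
  obtain ⟨⟨w, hwN⟩, hw⟩ := hμ.exists_hasEigenvector
  have hw0 : w ≠ 0 := by
    intro h
    exact hw.2 (by simp [Subtype.ext_iff, h])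
  have hAw : A *ᵥ w = μ • w := by
    have := hw.1
    rw [Module.End.mem_eigenspace_iff] at this
    have := congrArg Subtype.val this
    simpa [LinearMap.restrict_apply] using this
  have hCw : C *ᵥ w = 0 := by
    have := Submodule.mem_iInf _ |>.mp hwN 0
    simpa using this
  refine hw0 (hPBH μ w ?_ hCw)
  rw [Matrix.sub_mulVec, Matrix.smul_mulVec, Matrix.one_mulVec, hAw, sub_self]

lemma eventually_pow_norm_le {𝔸 : Type*} [NormedRing 𝔸] [NormedAlgebra ℂ 𝔸] [CompleteSpace 𝔸]
    (a : 𝔸) (ha : ∀ μ ∈ spectrum ℂ a, ‖μ‖ < 1) :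
    ∃ r : ℝ, 0 ≤ r ∧ r < 1 ∧ ∀ᶠ k : ℕ in atTop, ‖a ^ k‖ ≤ r ^ k := by
  rcases subsingleton_or_nontrivial 𝔸 with hs | hs
  · refine ⟨0, le_rfl, one_pos, ?_⟩
    filter_upwards [eventually_ge_atTop 1] with k hk
    have : a ^ k = 0 := Subsingleton.elim _ _
    simp [this, zero_pow (by omega : k ≠ 0)]
  · have h1 : spectralRadius ℂ a < 1 := by
      have := spectrum.spectralRadius_lt_of_forall_lt (a := a) (r := 1)
        (fun z hz => by simpa [← NNReal.coe_lt_coe] using ha z hz)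
      simpa using this
    obtain ⟨r, hr1, hr2⟩ := ENNReal.lt_iff_exists_nnreal_btwn.mp h1
    have hlt := (spectrum.pow_nnnorm_pow_one_div_tendsto_nhds_spectralRadius a
      ).eventually_lt_const hr1
    refine ⟨r, r.coe_nonneg, by exact_mod_cast hr2, ?_⟩
    filter_upwards [hlt, eventually_ge_atTop 1] with k hk hk1
    have hkne : (k : ℝ) ≠ 0 := by positivity
    have h2 := ENNReal.rpow_lt_rpow hk (by positivity : (0:ℝ) < (k:ℝ))
    rw [← ENNReal.rpow_mul, one_div, inv_mul_cancel₀ hkne, ENNReal.rpow_one,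
      ENNReal.rpow_natCast, ← ENNReal.coe_pow, ENNReal.coe_lt_coe] at h2
    have := h2.le
    rw [← coe_nnnorm (a ^ k)]
    exact_mod_cast this

lemma exists_P (A : Matrix m m ℂ) (C : Matrix q m ℂ)
    (hA : ∀ μ ∈ spectrum ℂ A, ‖μ‖ < 1)
    (hPBH : ∀ (s : ℂ) (v : m → ℂ),
      (s • (1 : Matrix m m ℂ) - A) *ᵥ v = 0 → C *ᵥ v = 0 → v = 0)
    (J : Matrix m m ℂ →ₗ[ℝ] Matrix m m ℂ)
    (hJmul : ∀ X Y, J (X * Y) = J X * J Y) (hJone : J 1 = 1)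
    (hJct : ∀ X, J Xᴴ = (J X)ᴴ) (hJA : J A = A) (hJQ : J (Cᴴ * C) = Cᴴ * C) :
    ∃ P : Matrix m m ℂ, P.PosDef ∧ Aᴴ * P * A - P = -(Cᴴ * C) ∧ J P = P := by
  letI : NormedRing (Matrix m m ℂ) := Matrix.linftyOpNormedRing
  letI : NormedAlgebra ℂ (Matrix m m ℂ) := Matrix.linftyOpNormedAlgebra
  haveI : FiniteDimensional ℝ (Matrix m m ℂ) := Module.Finite.trans ℂ (Matrix m m ℂ)
  set Q : Matrix m m ℂ := Cᴴ * C with hQdef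
  set S : ℕ → Matrix m m ℂ := fun k => (Aᴴ) ^ k * Q * A ^ k with hSdef
  obtain ⟨r, hr0, hr1, hrev⟩ := eventually_pow_norm_le A hA
  obtain ⟨r', hr0', hr1', hrev'⟩ := eventually_pow_norm_le Aᴴ (spec_ct A hA)
  have hsum : Summable S := by
    refine Summable.of_norm_bounded_eventually_nat (g := fun k => ‖Q‖ * (r' * r) ^ k)
      (((summable_geometric_of_lt_one (by positivity) (by nlinarith)).mul_left ‖Q‖)) ?_
    filter_upwards [hrev, hrev'] with k h1 h2
    have hb : ‖S k‖ ≤ ‖(Aᴴ) ^ k‖ * ‖Q‖ * ‖A ^ k‖ :=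
      le_trans (norm_mul_le _ _) (by gcongr; exact norm_mul_le _ _)
    calc ‖S k‖ ≤ ‖(Aᴴ) ^ k‖ * ‖Q‖ * ‖A ^ k‖ := hb
      _ ≤ r' ^ k * ‖Q‖ * r ^ k := by
          gcongr <;> first | exact norm_nonneg _ | positivity | assumption
      _ = ‖Q‖ * (r' * r) ^ k := by ring
  set P : Matrix m m ℂ := ∑' k, S k with hPdef
  -- the Lyapunov equation
  have hS0 : S 0 = Q := by simp [hSdef]
  have hSshift : ∀ k, Aᴴ * S k * A = S (k + 1) := by
    intro k
    show Aᴴ * (Aᴴ ^ k * Q * A ^ k) * A = Aᴴ ^ (k + 1) * Q * A ^ (k + 1)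
    rw [pow_succ A k, pow_succ' Aᴴ k]
    simp only [Matrix.mul_assoc]
  have hL : Aᴴ * P * A = ∑' k, S (k + 1) := by
    let L : Matrix m m ℂ →ₗ[ℂ] Matrix m m ℂ :=
      { toFun := fun X => Aᴴ * X * A
        map_add' := fun X Y => by noncomm_ring
        map_smul' := fun c X => by
          simp [Matrix.mul_smul, Matrix.smul_mul] }
    have := (LinearMap.toContinuousLinearMap L).map_tsum hsum
    simp only [LinearMap.coe_toContinuousLinearMap', L, LinearMap.coe_mk, AddHom.coe_mk] at this
    rw [hPdef, this]
    exact tsum_congr hSshift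
  have heq : Aᴴ * P * A - P = -Q := by
    have hP0 : P = Q + ∑' k, S (k + 1) := by rw [hPdef, Summable.tsum_eq_zero_add hsum, hS0]
    rw [hL]
    nth_rewrite 1 [hP0]
    abel
  -- J symmetry
  have hJpow : ∀ (X : Matrix m m ℂ) (k : ℕ), J (X ^ k) = (J X) ^ k := by
    intro X k
    induction k with
    | zero => simpa using hJone
    | succ k ih => rw [pow_succ, hJmul, ih, pow_succ]
  have hJS : ∀ k, J (S k) = S k := by
    intro k
    rw [hSdef]
    simp only [hJmul, hJpow, hJct, hJA, hJQ]
  have hJP : J P = P := by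
    have := (LinearMap.toContinuousLinearMap J).map_tsum hsum
    simp only [LinearMap.coe_toContinuousLinearMap'] at this
    rw [hPdef, this]
    exact tsum_congr hJS
  -- Hermitian
  have hQH : Qᴴ = Q := by rw [hQdef, Matrix.conjTranspose_mul, Matrix.conjTranspose_conjTranspose]
  have hSH : ∀ k, (S k)ᴴ = S k := by
    intro k
    simp only [hSdef, Matrix.conjTranspose_mul, Matrix.conjTranspose_pow,
      Matrix.conjTranspose_conjTranspose, hQH]
    noncomm_ring
  have hPH : P.IsHermitian := by
    let T : Matrix m m ℂ →ₗ[ℝ] Matrix m m ℂ :=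
      { toFun := fun X => Xᴴ
        map_add' := fun X Y => Matrix.conjTranspose_add _ _
        map_smul' := fun c X => by
          ext i j
          simp [Matrix.conjTranspose_apply, star_smul] }
    have := (LinearMap.toContinuousLinearMap T).map_tsum hsum
    simp only [LinearMap.coe_toContinuousLinearMap', T, LinearMap.coe_mk, AddHom.coe_mk] at this
    unfold Matrix.IsHermitian
    rw [hPdef, this]
    exact tsum_congr hSH
  -- positivity
  refine ⟨P, Matrix.PosDef.of_dotProduct_mulVec_pos hPH ?_, heq, hJP⟩
  intro v hv
  let φ : Matrix m m ℂ →ₗ[ℂ] ℂ :=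
    { toFun := fun X => star v ⬝ᵥ (X *ᵥ v)
      map_add' := fun X Y => by simp only [Matrix.add_mulVec, dotProduct_add]
      map_smul' := fun c X => by
        simp only [Matrix.smul_mulVec, dotProduct_smul, RingHom.id_apply, smul_eq_mul] }
  have hφsum : Summable (fun k => φ (S k)) :=
    hsum.map (LinearMap.toContinuousLinearMap φ)
      (LinearMap.toContinuousLinearMap φ).continuous
  have hφP : φ P = ∑' k, φ (S k) := by
    have := (LinearMap.toContinuousLinearMap φ).map_tsum hsum
    simpa using this
  set w : ℕ → q → ℂ := fun k => (C * A ^ k) *ᵥ v with hwdef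
  set g : ℕ → ℝ := fun k => (φ (S k)).re with hgdef
  have hφSk : ∀ k, φ (S k) = star (w k) ⬝ᵥ (w k) := by
    intro k
    have hfac : S k = (C * A ^ k)ᴴ * (C * A ^ k) := by
      simp only [hSdef, hQdef, Matrix.conjTranspose_mul, Matrix.conjTranspose_pow,
        Matrix.mul_assoc]
    show star v ⬝ᵥ (S k *ᵥ v) = _
    rw [hfac, quad_eq]
  have hgc : ∀ k, φ (S k) = ((g k : ℝ) : ℂ) := by
    intro k
    have h0 : (0 : ℂ) ≤ φ (S k) := by rw [hφSk k]; exact dotProduct_star_self_nonneg _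
    rw [Complex.le_def] at h0
    have him : (φ (S k)).im = 0 := by simpa using h0.2.symm
    exact Complex.ext (by simp [hgdef]) (by simp [him])
  have hgsum : Summable g := by
    have := hφsum.map Complex.reCLM Complex.reCLM.continuous
    simpa [hgdef, Complex.reCLM_apply, Function.comp_def] using this
  have hφPg : φ P = ((∑' k, g k : ℝ) : ℂ) := by
    have h2 := Complex.ofRealCLM.map_tsum hgsum
    simp only [Complex.ofRealCLM_apply] at h2
    rw [hφP, tsum_congr hgc]
    exact h2.symm
  have hgnn : ∀ k, 0 ≤ g k := by
    intro k
    have h0 : (0 : ℂ) ≤ φ (S k) := by rw [hφSk k]; exact dotProduct_star_self_nonneg _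
    rw [Complex.le_def] at h0
    simpa [hgdef] using h0.1
  have hex : ∃ k, w k ≠ 0 := by
    by_contra hc
    push_neg at hc
    exact hv (obs_aux A C hPBH v (by simpa [hwdef] using hc))
  obtain ⟨k₀, hk₀⟩ := hex
  have hgk₀ : 0 < g k₀ := by
    rcases lt_or_eq_of_le (hgnn k₀) with h | h
    · exact h
    · exfalso
      apply hk₀
      have : φ (S k₀) = 0 := by rw [hgc k₀, ← h]; simp
      rw [hφSk k₀] at this
      exact dotProduct_star_self_eq_zero.mp this
  have hpos : 0 < ∑' k, g k := Summable.tsum_pos hgsum hgnn k₀ hgk₀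
  have : (0 : ℂ) < φ P := by
    rw [hφPg]
    exact_mod_cast Complex.zero_lt_real.mpr hpos
  exact this

lemma schur_of_lyap (A : Matrix m m ℂ) (C : Matrix q m ℂ) (P : Matrix m m ℂ)
    (hP : P.PosDef) (heq : Aᴴ * P * A - P = -(Cᴴ * C))
    (hPBH : ∀ (s : ℂ) (v : m → ℂ),
      (s • (1 : Matrix m m ℂ) - A) *ᵥ v = 0 → C *ᵥ v = 0 → v = 0) :
    ∀ μ ∈ spectrum ℂ A, ‖μ‖ < 1 := by
  intro μ hμ
  by_contra habs
  push_neg at habs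
  obtain ⟨v, hv0, hvA⟩ := (spec_iff A μ).mp hμ
  set d : ℂ := star v ⬝ᵥ (P *ᵥ v) with hd
  set c : ℂ := star (C *ᵥ v) ⬝ᵥ (C *ᵥ v) with hc
  have hdpos : (0 : ℂ) < d := hP.dotProduct_mulVec_pos hv0
  have hcnn : (0 : ℂ) ≤ c := dotProduct_star_self_nonneg _
  have h1 : star v ⬝ᵥ ((Aᴴ * P * A) *ᵥ v)
      = ((‖μ‖ ^ 2 : ℝ) : ℂ) * d := by
    have hmv : (Aᴴ * P * A) *ᵥ v = Aᴴ *ᵥ (P *ᵥ (A *ᵥ v)) := by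
      rw [Matrix.mulVec_mulVec, Matrix.mulVec_mulVec]
    rw [hmv, Matrix.dotProduct_mulVec, ← Matrix.star_mulVec, hvA, star_smul,
      Matrix.mulVec_smul, smul_dotProduct, dotProduct_smul]
    rw [hd, smul_smul, smul_eq_mul]
    congr 1
    rw [← Complex.normSq_eq_norm_sq, Complex.normSq_eq_conj_mul_self, Complex.star_def]
  have h2 := congrArg (fun X : Matrix m m ℂ => star v ⬝ᵥ (X *ᵥ v)) heq
  simp only [Matrix.sub_mulVec, dotProduct_sub, Matrix.neg_mulVec, dotProduct_neg] at h2
  rw [h1, quad_eq] at h2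
  -- h2 : |μ|²·d − d = −c
  rw [Complex.lt_def] at hdpos
  rw [Complex.le_def] at hcnn
  have hdre : 0 < d.re := by simpa using hdpos.1
  have hcre : 0 ≤ c.re := by simpa using hcnn.1
  have hcim : c.im = 0 := by simpa using hcnn.2.symm
  rw [← hd, ← hc] at h2
  have hre := congrArg Complex.re h2
  simp only [Complex.sub_re, Complex.neg_re, Complex.mul_re, Complex.ofReal_re,
    Complex.ofReal_im, zero_mul, sub_zero] at hre
  have ht : 1 ≤ ‖μ‖ ^ 2 := by nlinarith
  have hcre0 : c.re = 0 := by nlinarith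
  have hc0 : c = 0 := Complex.ext hcre0 (by simpa using hcim)
  have hCv : C *ᵥ v = 0 := dotProduct_star_self_eq_zero.mp (by rw [← hc]; exact hc0)
  apply hv0
  apply hPBH μ v ?_ hCv
  rw [Matrix.sub_mulVec, Matrix.smul_mulVec, Matrix.one_mulVec, hvA, sub_self]

end AuxLemmas

section GlueLemmas

set_option linter.unusedSectionVars false
set_option maxHeartbeats 1000000

variable {n p : Type*} [Fintype n] [DecidableEq n] [Fintype p] [DecidableEq p]

lemma mconj_mconj {k l : Type*} (X : Matrix k l ℂ) : mconj (mconj X) = X := by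
  ext i j; simp [mconj]

lemma mconj_mul {k l o : Type*} [Fintype l] (X : Matrix k l ℂ) (Y : Matrix l o ℂ) :
    mconj (X * Y) = mconj X * mconj Y := by
  simp [mconj, Matrix.map_mul]

lemma mconj_one : mconj (1 : Matrix n n ℂ) = 1 := by
  simp [mconj, Matrix.map_one]

lemma mconj_ct {k l : Type*} (X : Matrix k l ℂ) : mconj (Xᴴ) = (mconj X)ᴴ := by
  ext i j; simp [mconj]

lemma mconj_fromBlocks {a b c d : Type*} (A : Matrix a b ℂ) (B : Matrix a d ℂ)
    (C : Matrix c b ℂ) (D : Matrix c d ℂ) :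
    mconj (Matrix.fromBlocks A B C D)
      = Matrix.fromBlocks (mconj A) (mconj B) (mconj C) (mconj D) := by
  ext (i | i) (j | j) <;> simp [mconj]

lemma Emat_mul_Emat : Emat n * Emat n = 1 := by
  simp [Emat, Matrix.fromBlocks_multiply, ← Matrix.fromBlocks_one]

lemma Emat_ct : (Emat n)ᴴ = Emat n := by
  simp [Emat, Matrix.fromBlocks_conjTranspose]

lemma E_conj_fromBlocks (A : Matrix p n ℂ) (B : Matrix p n ℂ)
    (C : Matrix p n ℂ) (D : Matrix p n ℂ) :
    Emat p * Matrix.fromBlocks A B C D * Emat n = Matrix.fromBlocks D C B A := by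
  simp [Emat, Matrix.fromBlocks_multiply]

lemma E_conj_dlift (X Y : Matrix p n ℂ) :
    Emat p * mconj (dlift X Y) * Emat n = dlift X Y := by
  rw [dlift, mconj_fromBlocks, E_conj_fromBlocks, mconj_mconj, mconj_mconj]

lemma mconj_dlift (X Y : Matrix p n ℂ) :
    mconj (dlift X Y) = Emat p * dlift X Y * Emat n := by
  have h := E_conj_dlift X Y
  calc mconj (dlift X Y)
      = (Emat p * Emat p) * mconj (dlift X Y) * (Emat n * Emat n) := by
        rw [Emat_mul_Emat, Emat_mul_Emat, Matrix.one_mul, Matrix.mul_one]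
    _ = Emat p * (Emat p * mconj (dlift X Y) * Emat n) * Emat n := by
        simp only [Matrix.mul_assoc]
    _ = Emat p * dlift X Y * Emat n := by rw [h]

lemma Emat_Emat_cancel {k o : Type*} [Fintype k] [DecidableEq k] (X : Matrix (k ⊕ k) o ℂ) :
    Emat k * (Emat k * X) = X := by
  rw [← Matrix.mul_assoc, Emat_mul_Emat, Matrix.one_mul]

lemma E_conj_Q (C₁ C₂ : Matrix p n ℂ) :
    Emat n * mconj ((dlift C₁ C₂)ᴴ * dlift C₁ C₂) * Emat n
      = (dlift C₁ C₂)ᴴ * dlift C₁ C₂ := by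
  set C := dlift C₁ C₂
  rw [mconj_mul, mconj_ct, mconj_dlift]
  show Emat n * ((Emat p * C * Emat n)ᴴ * (Emat p * C * Emat n)) * Emat n = Cᴴ * C
  rw [Matrix.conjTranspose_mul, Matrix.conjTranspose_mul, Emat_ct, Emat_ct]
  simp only [Matrix.mul_assoc]
  rw [Emat_mul_Emat, Matrix.mul_one, Emat_Emat_cancel, Emat_Emat_cancel]

def Jmap (n : Type*) [Fintype n] [DecidableEq n] :
    Matrix (n ⊕ n) (n ⊕ n) ℂ →ₗ[ℝ] Matrix (n ⊕ n) (n ⊕ n) ℂ where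
  toFun X := Emat n * mconj X * Emat n
  map_add' X Y := by
    have h : mconj (X + Y) = mconj X + mconj Y := by ext i j; simp [mconj]
    show Emat n * mconj (X + Y) * Emat n
      = Emat n * mconj X * Emat n + Emat n * mconj Y * Emat n
    rw [h, Matrix.mul_add, Matrix.add_mul]
  map_smul' c X := by
    have h : mconj (c • X) = c • mconj X := by
      ext i j
      simp [mconj, Matrix.smul_apply, star_smul]
    show Emat n * mconj (c • X) * Emat n = (RingHom.id ℝ) c • (Emat n * mconj X * Emat n)
    rw [h, RingHom.id_apply, Matrix.mul_smul, Matrix.smul_mul]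

lemma Jmap_mul (X Y : Matrix (n ⊕ n) (n ⊕ n) ℂ) :
    Jmap n (X * Y) = Jmap n X * Jmap n Y := by
  show Emat n * mconj (X * Y) * Emat n
    = (Emat n * mconj X * Emat n) * (Emat n * mconj Y * Emat n)
  rw [mconj_mul]
  calc Emat n * (mconj X * mconj Y) * Emat n
      = Emat n * mconj X * (Emat n * Emat n) * mconj Y * Emat n := by
        rw [Emat_mul_Emat]; simp only [Matrix.mul_assoc, Matrix.one_mul]
    _ = _ := by simp only [Matrix.mul_assoc]

lemma Jmap_one : Jmap n 1 = 1 := by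
  show Emat n * mconj 1 * Emat n = 1
  rw [mconj_one, Matrix.mul_one, Emat_mul_Emat]

lemma Jmap_ct (X : Matrix (n ⊕ n) (n ⊕ n) ℂ) : Jmap n (Xᴴ) = (Jmap n X)ᴴ := by
  show Emat n * mconj Xᴴ * Emat n = (Emat n * mconj X * Emat n)ᴴ
  rw [mconj_ct, Matrix.conjTranspose_mul, Matrix.conjTranspose_mul, Emat_ct]
  simp only [Matrix.mul_assoc]

lemma dlift_of_Jfix (P : Matrix (n ⊕ n) (n ⊕ n) ℂ) (h : Jmap n P = P) :
    dlift (Matrix.toBlocks₁₁ P) (Matrix.toBlocks₂₁ P) = P := by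
  have hb := (Matrix.fromBlocks_toBlocks P).symm
  set P₁₁ := Matrix.toBlocks₁₁ P
  set P₁₂ := Matrix.toBlocks₁₂ P
  set P₂₁ := Matrix.toBlocks₂₁ P
  set P₂₂ := Matrix.toBlocks₂₂ P
  have hJ : Matrix.fromBlocks (mconj P₂₂) (mconj P₂₁) (mconj P₁₂) (mconj P₁₁)
      = Matrix.fromBlocks P₁₁ P₁₂ P₂₁ P₂₂ := by
    calc Matrix.fromBlocks (mconj P₂₂) (mconj P₂₁) (mconj P₁₂) (mconj P₁₁)
        = Emat n * mconj P * Emat n := by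
          rw [hb, mconj_fromBlocks, E_conj_fromBlocks]
      _ = P := h
      _ = _ := hb
  have h11 : mconj P₂₂ = P₁₁ := by
    have := congrArg Matrix.toBlocks₁₁ hJ
    simpa [Matrix.toBlocks_fromBlocks₁₁] using this
  have h21 : mconj P₁₂ = P₂₁ := by
    have := congrArg Matrix.toBlocks₂₁ hJ
    simpa [Matrix.toBlocks_fromBlocks₂₁] using this
  have h12 : mconj P₂₁ = P₁₂ := by rw [← h21, mconj_mconj]
  have h22 : mconj P₁₁ = P₂₂ := by rw [← h11, mconj_mconj]
  rw [dlift, h12, h22]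
  exact hb.symm

end GlueLemmas

set_option maxHeartbeats 1000000 in
/-- discrete-time Lyapunov stability theorem for the complex-valued
linear system: under the PBH observability condition, `{A₁,A₂}_⋄` is Schur iff the
discrete Lyapunov equation `A_Cᴴ P_C A_C − P_C = −C_Cᴴ C_C` has a solution
`P_C = {P₁,P₂}_⋄` which is Hermitian positive definite. -/
theorem stmt_15 (n p : ℕ) (A₁ A₂ : Matrix (Fin n) (Fin n) ℂ)
    (C₁ C₂ : Matrix (Fin p) (Fin n) ℂ)
    (hobs : ∀ s : ℂ,
      (Matrix.fromRows
        (Matrix.fromBlocks (s • (1 : Matrix (Fin n) (Fin n) ℂ) - A₁) (-(mconj A₂)) (-A₂)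
          (s • (1 : Matrix (Fin n) (Fin n) ℂ) - mconj A₁))
        (Matrix.fromBlocks C₁ (mconj C₂) C₂ (mconj C₁))).rank = 2 * n) :
    (∀ μ ∈ spectrum ℂ (dlift A₁ A₂), ‖μ‖ < 1) ↔
      ∃ P₁ P₂ : Matrix (Fin n) (Fin n) ℂ,
        (dlift P₁ P₂).PosDef ∧
        (dlift A₁ A₂)ᴴ * dlift P₁ P₂ * dlift A₁ A₂ - dlift P₁ P₂ =
          -((dlift C₁ C₂)ᴴ * dlift C₁ C₂) := by
  have hcard : Fintype.card (Fin n ⊕ Fin n) = 2 * n := by simp [two_mul]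
  have htop : ∀ s : ℂ,
      Matrix.fromBlocks (s • (1 : Matrix (Fin n) (Fin n) ℂ) - A₁) (-(mconj A₂)) (-A₂)
        (s • (1 : Matrix (Fin n) (Fin n) ℂ) - mconj A₁)
      = s • (1 : Matrix (Fin n ⊕ Fin n) (Fin n ⊕ Fin n) ℂ) - dlift A₁ A₂ := by
    intro s
    ext (i | i) (j | j) <;>
      simp [dlift, Matrix.one_apply, Matrix.sub_apply, Matrix.smul_apply]
  have hPBH : ∀ (s : ℂ) (v : (Fin n ⊕ Fin n) → ℂ),
      (s • (1 : Matrix (Fin n ⊕ Fin n) (Fin n ⊕ Fin n) ℂ) - dlift A₁ A₂) *ᵥ v = 0 →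
      (dlift C₁ C₂) *ᵥ v = 0 → v = 0 := by
    intro s
    apply aux_rank_inj
    rw [hcard, ← htop s]
    exact hobs s
  constructor
  · intro hA
    have hJA : Jmap (Fin n) (dlift A₁ A₂) = dlift A₁ A₂ := E_conj_dlift A₁ A₂
    have hJQ : Jmap (Fin n) ((dlift C₁ C₂)ᴴ * dlift C₁ C₂)
        = (dlift C₁ C₂)ᴴ * dlift C₁ C₂ := E_conj_Q C₁ C₂
    obtain ⟨P, hPpd, heq, hJP⟩ := exists_P (dlift A₁ A₂) (dlift C₁ C₂) hA hPBH
      (Jmap (Fin n)) (fun X Y => Jmap_mul X Y) Jmap_one (fun X => Jmap_ct X) hJA hJQ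
    refine ⟨P.toBlocks₁₁, P.toBlocks₂₁, ?_, ?_⟩
    · rw [dlift_of_Jfix P hJP]; exact hPpd
    · rw [dlift_of_Jfix P hJP]; exact heq
  · rintro ⟨P₁, P₂, hpd, heq⟩
    exact schur_of_lyap (dlift A₁ A₂) (dlift C₁ C₂) (dlift P₁ P₂) hpd heq hPBH
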